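/- arXiv:math/0405067 — 2 statements merged into one kernel-verified Lean document; each statement's English description precedes it below -/
import Mathlib

section
/- Let {φ_t}_{t∈ℝ} be the special flow on Ω = {(y,u) : y ∈ Y, 0 ≤ u < r(y)} built from (Y, τ), V and r, where in addition r(y) ≥ θ for all y ∈ Y for some fixed θ > 0. Let {A_t}_{t∈ℝ} be a cocycle for {φ_t} taking values in ℝ∖{0} and {F_t}_{t∈ℝ} a semi-additive functional related to {A_t}. Fix 0 < v₀ < u₀ < θ and define for n ∈ ℤ: G_n(y) = (A_{−u₀}(y,u₀))^{-1} F_{r_n(y)−v₀}(y,u₀) + (A_{v₀−u₀}(y,u₀−v₀))^{-1} F_{v₀}(y,u₀−v₀). Then for all n, m ∈ ℤ and all y ∈ Y, G_{n+m}(y) = G_n(y) + A_{r_n(y)}(y,0) G_m(V^n y). -/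
/-- Signed sum `Σ_{k∈[0,n)} h(k)`: equal to `Σ_{k=0}^{n−1} h(k)` for `n ≥ 0` and to
`−Σ_{k=n}^{−1} h(k)` for `n ≤ −1`. -/
noncomputable def zsum (h : ℤ → ℝ) (n : ℤ) : ℝ :=
  if 0 ≤ n then ∑ k ∈ Finset.range n.toNat, h (k : ℤ)
  else -∑ k ∈ Finset.range (-n).toNat, h (n + (k : ℤ))

/-- `r_n(y) = Σ_{k∈[0,n)} r(V^k y)` for the special flow data `(V, r)`. -/
noncomputable def rn {Y : Type*} (V : Equiv.Perm Y) (r : Y → ℝ) (n : ℤ) (y : Y) : ℝ :=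
  zsum (fun k => r ((V ^ k) y)) n

lemma zsum_zero (h : ℤ → ℝ) : zsum h 0 = 0 := by
  simp [zsum]

lemma zsum_succ (h : ℤ → ℝ) (n : ℤ) : zsum h (n + 1) = zsum h n + h n := by
  rcases le_or_gt 0 n with hn | hn
  · have hn1 : (0 : ℤ) ≤ n + 1 := by omega
    have ht : (n + 1).toNat = n.toNat + 1 := by omega
    simp only [zsum, if_pos hn, if_pos hn1, ht, Finset.sum_range_succ]
    congr 2
    omega
  · rcases eq_or_lt_of_le (by omega : n + 1 ≤ 0) with h0 | h0
    · have hn' : n = -1 := by omega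
      subst hn'
      simp [zsum, zsum_zero]
    · have hn1 : ¬ (0 : ℤ) ≤ n + 1 := by omega
      have hnn : ¬ (0 : ℤ) ≤ n := by omega
      have ht : (-n).toNat = (-(n + 1)).toNat + 1 := by omega
      simp only [zsum, if_neg hn1, if_neg hnn, ht, Finset.sum_range_succ']
      push_cast
      rw [Finset.sum_congr rfl
        (fun k (_ : k ∈ Finset.range (-(n + 1)).toNat) =>
          by rw [show n + 1 + (k : ℤ) = n + ((k : ℤ) + 1) from by ring])]
      simp only [add_zero]
      abel

lemma rn_zero {Y : Type*} (V : Equiv.Perm Y) (r : Y → ℝ) (y : Y) : rn V r 0 y = 0 :=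
  zsum_zero _

lemma rn_succ {Y : Type*} (V : Equiv.Perm Y) (r : Y → ℝ) (n : ℤ) (y : Y) :
    rn V r (n + 1) y = rn V r n y + r ((V ^ n) y) :=
  zsum_succ _ n

lemma pow_add_apply {Y : Type*} (V : Equiv.Perm Y) (n m : ℤ) (y : Y) :
    (V ^ (n + m)) y = (V ^ m) ((V ^ n) y) := by
  rw [add_comm, zpow_add]
  rfl

lemma rn_add {Y : Type*} (V : Equiv.Perm Y) (r : Y → ℝ) (n m : ℤ) (y : Y) :
    rn V r (n + m) y = rn V r n y + rn V r m ((V ^ n) y) := by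
  induction m using Int.induction_on with
  | zero => simp [rn_zero]
  | succ m ih =>
      have h1 : n + ((m : ℤ) + 1) = (n + (m : ℤ)) + 1 := by ring
      rw [h1, rn_succ, ih, rn_succ, pow_add_apply]
      ring
  | pred m ih =>
      have e1 : rn V r (n + -(m : ℤ)) y =
          rn V r (n + (-(m : ℤ) - 1)) y + r ((V ^ (-(m : ℤ) - 1)) ((V ^ n) y)) := by
        have h := rn_succ V r (n + (-(m : ℤ) - 1)) y
        rw [show n + (-(m : ℤ) - 1) + 1 = n + -(m : ℤ) from by ring, pow_add_apply] at h
        exact h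
      have e2 : rn V r (-(m : ℤ)) ((V ^ n) y) =
          rn V r (-(m : ℤ) - 1) ((V ^ n) y) + r ((V ^ (-(m : ℤ) - 1)) ((V ^ n) y)) := by
        have h := rn_succ V r (-(m : ℤ) - 1) ((V ^ n) y)
        rw [show -(m : ℤ) - 1 + 1 = -(m : ℤ) from by ring] at h
        exact h
      linarith [ih, e1, e2]

/-- for the special flow with `r ≥ θ > 0`, a cocycle `A` (values in
`ℝ∖{0}`), a semi-additive functional `F` related to `A`, and `0 < v₀ < u₀ < θ`,
setting `G_n(y) = (A_{−u₀}(y,u₀))⁻¹ F_{r_n(y)−v₀}(y,u₀)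
 + (A_{v₀−u₀}(y,u₀−v₀))⁻¹ F_{v₀}(y,u₀−v₀)`, one has
`G_{n+m}(y) = G_n(y) + A_{r_n(y)}(y,0) G_m(V^n y)` for all `n, m ∈ ℤ`, `y ∈ Y`. -/
theorem stmt7 {Y : Type*} (V : Equiv.Perm Y) (r : Y → ℝ) (hr : ∀ y, 0 < r y)
    (hdiv_top : ∀ y, Filter.Tendsto (fun n : ℕ => rn V r (n : ℤ) y) Filter.atTop Filter.atTop)
    (hdiv_bot : ∀ y, Filter.Tendsto (fun n : ℕ => rn V r (-(n : ℤ)) y) Filter.atTop Filter.atBot)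
    (θ : ℝ) (hθ : 0 < θ) (hrθ : ∀ y, θ ≤ r y)
    (φ : ℝ → Y × ℝ → Y × ℝ)
    (hφ : ∀ (t u : ℝ) (y : Y) (n : ℤ), 0 ≤ u → u < r y →
      rn V r n y ≤ t + u → t + u < rn V r (n + 1) y →
      φ t (y, u) = ((V ^ n) y, t + u - rn V r n y))
    (A : ℝ → Y × ℝ → ℝ)
    (hA_ne : ∀ (t u : ℝ) (y : Y), 0 ≤ u → u < r y → A t (y, u) ≠ 0)
    (hA : ∀ (t1 t2 u : ℝ) (y : Y), 0 ≤ u → u < r y →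
      A (t1 + t2) (y, u) = A t1 (y, u) * A t2 (φ t1 (y, u)))
    (F : ℝ → Y × ℝ → ℝ)
    (hF : ∀ (t1 t2 u : ℝ) (y : Y), 0 ≤ u → u < r y →
      F (t1 + t2) (y, u) = F t1 (y, u) + A t1 (y, u) * F t2 (φ t1 (y, u)))
    (u0 v0 : ℝ) (hv0 : 0 < v0) (hv0u0 : v0 < u0) (hu0θ : u0 < θ) :
    ∀ (n m : ℤ) (y : Y),
      ((A (-u0) (y, u0))⁻¹ * F (rn V r (n + m) y - v0) (y, u0) +
        (A (v0 - u0) (y, u0 - v0))⁻¹ * F v0 (y, u0 - v0)) =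
      ((A (-u0) (y, u0))⁻¹ * F (rn V r n y - v0) (y, u0) +
        (A (v0 - u0) (y, u0 - v0))⁻¹ * F v0 (y, u0 - v0)) +
      A (rn V r n y) (y, 0) *
        ((A (-u0) ((V ^ n) y, u0))⁻¹ * F (rn V r m ((V ^ n) y) - v0) ((V ^ n) y, u0) +
          (A (v0 - u0) ((V ^ n) y, u0 - v0))⁻¹ * F v0 ((V ^ n) y, u0 - v0)) := by
  -- basic facts about the range of r and the parameters
  have hu0 : 0 < u0 := lt_trans hv0 hv0u0
  have hu0r : ∀ z : Y, u0 < r z := fun z => lt_of_lt_of_le hu0θ (hrθ z)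
  have huv0 : 0 < u0 - v0 := by linarith
  have huvr : ∀ z : Y, u0 - v0 < r z := fun z => by have := hu0r z; linarith
  have h0r : ∀ z : Y, (0 : ℝ) < r z := hr
  have hrn1 : ∀ z : Y, rn V r 1 z = r z := by
    intro z
    have := rn_succ V r 0 z
    simpa [rn_zero] using this
  -- φ fixes points at time 0
  have hφ0 : ∀ (z : Y) (u : ℝ), 0 ≤ u → u < r z → φ 0 (z, u) = (z, u) := by
    intro z u h1 h2
    have := hφ 0 u z 0 h1 h2 (by rw [rn_zero]; linarith)
      (by rw [show (0 : ℤ) + 1 = 1 from rfl, hrn1]; linarith)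
    simpa [rn_zero] using this
  -- at time 0 the cocycle is 1 and the functional is 0
  have hA0 : ∀ (z : Y) (u : ℝ), 0 ≤ u → u < r z → A 0 (z, u) = 1 := by
    intro z u h1 h2
    have h := hA 0 0 u z h1 h2
    rw [hφ0 z u h1 h2] at h
    have hne := hA_ne 0 u z h1 h2
    simp only [add_zero] at h
    have h2' : A 0 (z, u) * 1 = A 0 (z, u) * A 0 (z, u) := by rw [mul_one]; exact h
    exact (mul_left_cancel₀ hne h2').symm
  have hF0 : ∀ (z : Y) (u : ℝ), 0 ≤ u → u < r z → F 0 (z, u) = 0 := by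
    intro z u h1 h2
    have h := hF 0 0 u z h1 h2
    rw [hφ0 z u h1 h2, hA0 z u h1 h2] at h
    simp only [add_zero, one_mul] at h
    linarith
  -- key flow computations
  have hφ1 : ∀ z : Y, φ (-u0) (z, u0) = (z, 0) := by
    intro z
    have := hφ (-u0) u0 z 0 (le_of_lt hu0) (hu0r z)
      (by rw [rn_zero]; linarith)
      (by rw [show (0 : ℤ) + 1 = 1 from rfl, hrn1]; have := h0r z; linarith)
    simpa [rn_zero] using this
  have hφ2 : ∀ z : Y, φ (v0 - u0) (z, u0 - v0) = (z, 0) := by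
    intro z
    have := hφ (v0 - u0) (u0 - v0) z 0 (le_of_lt huv0) (huvr z)
      (by rw [rn_zero]; linarith)
      (by rw [show (0 : ℤ) + 1 = 1 from rfl, hrn1]; have := h0r z; linarith)
    simpa [rn_zero, show v0 - u0 + (u0 - v0) = 0 by ring] using this
  have hφ3 : ∀ (k : ℤ) (z : Y), φ (rn V r k z - u0) (z, u0) = ((V ^ k) z, 0) := by
    intro k z
    have hlt : rn V r k z - u0 + u0 < rn V r (k + 1) z := by
      rw [rn_succ]
      have := h0r ((V ^ k) z)
      linarith
    have := hφ (rn V r k z - u0) u0 z k (le_of_lt hu0) (hu0r z) (by linarith) hlt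
    simpa [show rn V r k z - u0 + u0 - rn V r k z = 0 by ring] using this
  have hφ4 : ∀ (k : ℤ) (z : Y), φ (rn V r k z) (z, 0) = ((V ^ k) z, 0) := by
    intro k z
    have hlt : rn V r k z + 0 < rn V r (k + 1) z := by
      rw [rn_succ]
      have := h0r ((V ^ k) z)
      linarith
    have := hφ (rn V r k z) 0 z k le_rfl (h0r z) (by linarith) hlt
    simpa using this
  -- the key formula for G_k(z)
  have key : ∀ (k : ℤ) (z : Y),
      (A (-u0) (z, u0))⁻¹ * F (rn V r k z - v0) (z, u0) +
        (A (v0 - u0) (z, u0 - v0))⁻¹ * F v0 (z, u0 - v0) =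
      F (rn V r k z) (z, 0) + A (rn V r k z) (z, 0) * F (u0 - v0) ((V ^ k) z, 0)
        - F (u0 - v0) (z, 0) := by
    intro k z
    set t := rn V r k z with ht
    set a := A (-u0) (z, u0) with ha
    set b := A (v0 - u0) (z, u0 - v0) with hb
    have ha0 : a ≠ 0 := hA_ne (-u0) u0 z (le_of_lt hu0) (hu0r z)
    have hb0 : b ≠ 0 := hA_ne (v0 - u0) (u0 - v0) z (le_of_lt huv0) (huvr z)
    -- e1 : F (-u0) (z,u0) = -(a * F u0 (z,0))
    have e1 : F (-u0) (z, u0) = -(a * F u0 (z, 0)) := by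
      have h := hF (-u0) u0 u0 z (le_of_lt hu0) (hu0r z)
      rw [hφ1 z, show -u0 + u0 = 0 by ring, hF0 z u0 (le_of_lt hu0) (hu0r z)] at h
      linarith
    -- e2 : F (t - u0) (z,u0) = F (-u0)(z,u0) + a * F t (z,0)
    have e2 : F (t - u0) (z, u0) = F (-u0) (z, u0) + a * F t (z, 0) := by
      have h := hF (-u0) t u0 z (le_of_lt hu0) (hu0r z)
      rw [hφ1 z, show -u0 + t = t - u0 by ring] at h
      exact h
    -- e3 : A (t - u0) (z,u0) = a * A t (z,0)
    have e3 : A (t - u0) (z, u0) = a * A t (z, 0) := by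
      have h := hA (-u0) t u0 z (le_of_lt hu0) (hu0r z)
      rw [hφ1 z, show -u0 + t = t - u0 by ring] at h
      exact h
    -- e4 : F (t - v0) (z,u0)
    have e4 : F (t - v0) (z, u0) =
        F (t - u0) (z, u0) + A (t - u0) (z, u0) * F (u0 - v0) ((V ^ k) z, 0) := by
      have h := hF (t - u0) (u0 - v0) u0 z (le_of_lt hu0) (hu0r z)
      rw [hφ3 k z, show t - u0 + (u0 - v0) = t - v0 by ring] at h
      exact h
    -- e5 : F (v0 - u0) (z, u0 - v0) = -(b * F (u0 - v0) (z,0))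
    have e5 : F (v0 - u0) (z, u0 - v0) = -(b * F (u0 - v0) (z, 0)) := by
      have h := hF (v0 - u0) (u0 - v0) (u0 - v0) z (le_of_lt huv0) (huvr z)
      rw [hφ2 z, show v0 - u0 + (u0 - v0) = 0 by ring,
        hF0 z (u0 - v0) (le_of_lt huv0) (huvr z)] at h
      linarith
    -- e6 : F v0 (z, u0 - v0)
    have e6 : F v0 (z, u0 - v0) = F (v0 - u0) (z, u0 - v0) + b * F u0 (z, 0) := by
      have h := hF (v0 - u0) u0 (u0 - v0) z (le_of_lt huv0) (huvr z)
      rw [hφ2 z, show v0 - u0 + u0 = v0 by ring] at h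
      exact h
    rw [e4, e3, e2, e1, e6, e5]
    field_simp
    ring
  -- main computation
  intro n m y
  have hFadd : F (rn V r n y + rn V r m ((V ^ n) y)) (y, 0) =
      F (rn V r n y) (y, 0) +
        A (rn V r n y) (y, 0) * F (rn V r m ((V ^ n) y)) ((V ^ n) y, 0) := by
    have h := hF (rn V r n y) (rn V r m ((V ^ n) y)) 0 y le_rfl (h0r y)
    rw [hφ4 n y] at h
    exact h
  have hAadd : A (rn V r n y + rn V r m ((V ^ n) y)) (y, 0) =
      A (rn V r n y) (y, 0) * A (rn V r m ((V ^ n) y)) ((V ^ n) y, 0) := by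
    have h := hA (rn V r n y) (rn V r m ((V ^ n) y)) 0 y le_rfl (h0r y)
    rw [hφ4 n y] at h
    exact h
  rw [key (n + m) y, key n y, key m ((V ^ n) y), rn_add V r n m y, pow_add_apply,
    hFadd, hAadd]
  ring
end

section
/- Let q : Z → (0,∞) be a function on a set Z, let {ψ_c}_{c>0} be the cyclic flow ψ_c(z,v) = (z, {v + ln c}_{q(z)}) on Z × [0,q(·)), and let κ ∈ ℝ (κ = H − 1/α). Let b₁ : Z → {−1,1} and b : Z × [0,q(·)) → {−1,1} be functions and define the cocycle b_c(z,v) = b₁(z)^{[v + ln c]_{q(z)}} · b(ψ_c(z,v))/b(z,v). Suppose j : (0,∞) × (Z × [0,q(·))) → ℝ, written j_c(z,v), satisfies j_{c1c2}(z,v) = c2^{-κ} j_{c1}(z,v) + b_{c1}(z,v) j_{c2}(ψ_{c1}(z,v)) for all c1, c2 > 0 and all (z,v) with 0 ≤ v < q(z). Then there exist functions j₁ : Z → ℝ and j : Z × [0,q(·)) → ℝ such that for all c > 0 and all (z,v) with 0 ≤ v < q(z): j_c(z,v) = b_c(z,v) j(ψ_c(z,v)) − c^{-κ} j(z,v) +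 (j₁(z)/b(z,v)) [v + ln c]_{q(z)} 𝟙{b₁(z) = 1} 𝟙{κ = 0}. -/
/-- `[v]_a = max{n ∈ ℤ : na ≤ v}` (for `a > 0` this is `⌊v/a⌋`). -/
noncomputable def ibr (a v : ℝ) : ℤ := ⌊v / a⌋

/-- `{v}_a = v − a[v]_a`, so that `0 ≤ {v}_a < a` for `a > 0`. -/
noncomputable def fr (a v : ℝ) : ℝ := v - a * ibr a v

lemma fr_nonneg {a : ℝ} (ha : 0 < a) (v : ℝ) : 0 ≤ fr a v := by
  have h : (⌊v / a⌋ : ℝ) * a ≤ v := (le_div_iff₀ ha).mp (Int.floor_le (v / a))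
  unfold fr ibr
  nlinarith [h]

lemma fr_lt {a : ℝ} (ha : 0 < a) (v : ℝ) : fr a v < a := by
  have h : v < ((⌊v / a⌋ : ℝ) + 1) * a := (div_lt_iff₀ ha).mp (Int.lt_floor_add_one (v / a))
  unfold fr ibr
  nlinarith [h]

lemma ibr_eq_zero {a v : ℝ} (ha : 0 < a) (h0 : 0 ≤ v) (h1 : v < a) : ibr a v = 0 := by
  unfold ibr
  rw [Int.floor_eq_zero_iff]
  constructor
  · positivity
  · rw [div_lt_one ha] at *; linarith [div_lt_one ha |>.mpr h1]

lemma fr_eq_self {a v : ℝ} (ha : 0 < a) (h0 : 0 ≤ v) (h1 : v < a) : fr a v = v := by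
  unfold fr
  rw [ibr_eq_zero ha h0 h1]; push_cast; ring

lemma ibr_fr_add {a : ℝ} (ha : 0 < a) (s t : ℝ) :
    ibr a (fr a s + t) = ibr a (s + t) - ibr a s := by
  unfold ibr fr ibr
  have : (s - a * ⌊s / a⌋ + t) / a = (s + t) / a - (⌊s / a⌋ : ℝ) := by
    field_simp; ring
  rw [this, Int.floor_sub_intCast]

lemma fr_fr_add {a : ℝ} (ha : 0 < a) (s t : ℝ) :
    fr a (fr a s + t) = fr a (s + t) := by
  have h := ibr_fr_add ha s t
  unfold fr at *
  rw [h]; push_cast; ring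

lemma ibr_mul {a : ℝ} (ha : 0 < a) (n : ℤ) : ibr a (a * n) = n := by
  unfold ibr
  rw [mul_comm, mul_div_assoc, div_self ha.ne', mul_one, Int.floor_intCast]

lemma fr_mul {a : ℝ} (ha : 0 < a) (n : ℤ) : fr a (a * n) = 0 := by
  unfold fr
  rw [ibr_mul ha]; ring

lemma exp_rpow' (t κ : ℝ) : Real.exp t ^ (-κ) = Real.exp (-(κ * t)) := by
  rw [Real.rpow_def_of_pos (Real.exp_pos t), Real.log_exp]
  ring_nf

lemma int_linear (f : ℤ → ℝ) (hf : ∀ n m, f (n + m) = f n + f m) : ∀ n, f n = n * f 1 := by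
  have h0 : f 0 = 0 := by have := hf 0 0; simp at this; linarith
  have hm1 : f (-1) = -f 1 := by have := hf 1 (-1); simp [h0] at this; linarith
  intro n
  induction n using Int.induction_on with
  | zero => simpa using h0
  | succ k ih => rw [hf k 1, ih]; push_cast; ring
  | pred k ih =>
      have e : (-(k : ℤ) - 1) = -k + -1 := by ring
      rw [e, hf, ih, hm1]; push_cast; ring

section Main

variable {Z : Type*} {q : Z → ℝ} {κ : ℝ} {b1 : Z → ℝ} {b : Z × ℝ → ℝ} {j : ℝ → Z × ℝ → ℝ}

/-- `φ z s = j (e^s) (z,0)` -/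
noncomputable def phiF (j : ℝ → Z × ℝ → ℝ) (z : Z) (s : ℝ) : ℝ := j (Real.exp s) (z, 0)

/-- `g z s = φ z s − b1^{[s]} φ z {s}` -/
noncomputable def gF (q : Z → ℝ) (b1 : Z → ℝ) (j : ℝ → Z × ℝ → ℝ) (z : Z) (s : ℝ) : ℝ :=
  phiF j z s - b1 z ^ ibr (q z) s * phiF j z (fr (q z) s)

noncomputable def hF (q : Z → ℝ) (b1 : Z → ℝ) (j : ℝ → Z × ℝ → ℝ) (z : Z) (n : ℤ) : ℝ :=
  gF q b1 j z (q z * n)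

noncomputable def j1F (q : Z → ℝ) (κ : ℝ) (b1 : Z → ℝ) (b : Z × ℝ → ℝ)
    (j : ℝ → Z × ℝ → ℝ) (z : Z) : ℝ :=
  if b1 z = 1 ∧ κ = 0 then b (z, 0) * hF q b1 j z 1 else 0

noncomputable def muF (q : Z → ℝ) (κ : ℝ) (b1 : Z → ℝ) (b : Z × ℝ → ℝ)
    (j : ℝ → Z × ℝ → ℝ) (z : Z) : ℝ :=
  if b1 z = 1 ∧ κ = 0 then 0
  else -(b (z, 0) * hF q b1 j z 1) / (Real.exp (-(κ * q z)) - b1 z)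

noncomputable def j0F (q : Z → ℝ) (κ : ℝ) (b1 : Z → ℝ) (b : Z × ℝ → ℝ)
    (j : ℝ → Z × ℝ → ℝ) (p : Z × ℝ) : ℝ :=
  b p * (b (p.1, 0) * phiF j p.1 p.2 + muF q κ b1 b j p.1 * Real.exp (-(κ * p.2)))

lemma L1 (hq : ∀ z, 0 < q z) (hb_val : ∀ p : Z × ℝ, b p = 1 ∨ b p = -1)
    (hj : ∀ c1 c2 : ℝ, 0 < c1 → 0 < c2 → ∀ (z : Z) (v : ℝ), 0 ≤ v → v < q z →
      j (c1 * c2) (z, v) = c2 ^ (-κ) * j c1 (z, v) +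
        (b1 z ^ ibr (q z) (v + Real.log c1) *
            (b (z, fr (q z) (v + Real.log c1)) / b (z, v))) *
          j c2 (z, fr (q z) (v + Real.log c1))) :
    ∀ (z : Z) (v : ℝ), 0 ≤ v → v < q z → ∀ t : ℝ,
      b (z, v) * j (Real.exp t) (z, v) =
        b (z, 0) * (phiF j z (v + t) - Real.exp (-(κ * t)) * phiF j z v) := by
  intro z v h0 h1 t
  have hb0 : b (z, (0:ℝ)) ≠ 0 := by rcases hb_val (z, (0:ℝ)) with h | h <;> rw [h] <;> norm_num
  have hbv : b (z, v) ≠ 0 := by rcases hb_val (z, v) with h | h <;> rw [h] <;> norm_num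
  have H := hj (Real.exp v) (Real.exp t) (Real.exp_pos v) (Real.exp_pos t) z 0 le_rfl (hq z)
  rw [Real.log_exp, zero_add, ibr_eq_zero (hq z) h0 h1, fr_eq_self (hq z) h0 h1,
    ← Real.exp_add, exp_rpow'] at H
  simp only [zpow_zero, one_mul] at H
  unfold phiF
  field_simp at H
  linear_combination (norm := ring_nf) -H

lemma L2 (hq : ∀ z, 0 < q z) (hb_val : ∀ p : Z × ℝ, b p = 1 ∨ b p = -1)
    (hj : ∀ c1 c2 : ℝ, 0 < c1 → 0 < c2 → ∀ (z : Z) (v : ℝ), 0 ≤ v → v < q z →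
      j (c1 * c2) (z, v) = c2 ^ (-κ) * j c1 (z, v) +
        (b1 z ^ ibr (q z) (v + Real.log c1) *
            (b (z, fr (q z) (v + Real.log c1)) / b (z, v))) *
          j c2 (z, fr (q z) (v + Real.log c1))) :
    ∀ (z : Z) (s t : ℝ),
      phiF j z (s + t) = Real.exp (-(κ * t)) * phiF j z s +
        b1 z ^ ibr (q z) s *
          (phiF j z (fr (q z) s + t) - Real.exp (-(κ * t)) * phiF j z (fr (q z) s)) := by
  intro z s t
  have hb0 : b (z, (0:ℝ)) ≠ 0 := by rcases hb_val (z, (0:ℝ)) with h | h <;> rw [h] <;> norm_num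
  have hbw : b (z, fr (q z) s) ≠ 0 := by
    rcases hb_val (z, fr (q z) s) with h | h <;> rw [h] <;> norm_num
  have H := hj (Real.exp s) (Real.exp t) (Real.exp_pos s) (Real.exp_pos t) z 0 le_rfl (hq z)
  rw [Real.log_exp, zero_add, ← Real.exp_add, exp_rpow'] at H
  have K := L1 hq hb_val hj z (fr (q z) s) (fr_nonneg (hq z) s) (fr_lt (hq z) s) t
  have hsq0 : b (z, (0:ℝ)) * b (z, (0:ℝ)) = 1 := by
    rcases hb_val (z, (0:ℝ)) with h | h <;> rw [h] <;> norm_num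
  unfold phiF at *
  field_simp at H
  linear_combination (norm := ring_nf) b (z, 0) * H + b (z, 0) * b1 z ^ ibr (q z) s * K -
    (j (Real.exp (s + t)) (z, 0) - Real.exp (-(κ * t)) * j (Real.exp s) (z, 0) -
      b1 z ^ ibr (q z) s * (j (Real.exp (fr (q z) s + t)) (z, 0) -
        Real.exp (-(κ * t)) * j (Real.exp (fr (q z) s)) (z, 0))) * hsq0

lemma L3 (hq : ∀ z, 0 < q z) (hb1_val : ∀ z, b1 z = 1 ∨ b1 z = -1)
    (hL2 : ∀ (z : Z) (s t : ℝ),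
      phiF j z (s + t) = Real.exp (-(κ * t)) * phiF j z s +
        b1 z ^ ibr (q z) s *
          (phiF j z (fr (q z) s + t) - Real.exp (-(κ * t)) * phiF j z (fr (q z) s))) :
    ∀ (z : Z) (s t : ℝ),
      gF q b1 j z (s + t) = b1 z ^ ibr (q z) s * gF q b1 j z (fr (q z) s + t) +
        Real.exp (-(κ * t)) * gF q b1 j z s := by
  intro z s t
  have hβ : b1 z ≠ 0 := by rcases hb1_val z with h | h <;> rw [h] <;> norm_num
  have e3 : b1 z ^ ibr (q z) s * b1 z ^ (ibr (q z) (s + t) - ibr (q z) s)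
      = b1 z ^ ibr (q z) (s + t) := by
    rw [← zpow_add₀ hβ]; congr 1; ring
  unfold gF
  rw [ibr_fr_add (hq z) s t, fr_fr_add (hq z) s t]
  linear_combination hL2 z s t + phiF j z (fr (q z) (s + t)) * e3

lemma L4 (hq : ∀ z, 0 < q z) :
    ∀ (z : Z) (v : ℝ), 0 ≤ v → v < q z → gF q b1 j z v = 0 := by
  intro z v h0 h1
  unfold gF
  rw [ibr_eq_zero (hq z) h0 h1, fr_eq_self (hq z) h0 h1, zpow_zero]
  ring

lemma L5 (hq : ∀ z, 0 < q z)
    (hL3 : ∀ (z : Z) (s t : ℝ),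
      gF q b1 j z (s + t) = b1 z ^ ibr (q z) s * gF q b1 j z (fr (q z) s + t) +
        Real.exp (-(κ * t)) * gF q b1 j z s) :
    ∀ (z : Z) (u : ℝ),
      gF q b1 j z u = Real.exp (-(κ * fr (q z) u)) * hF q b1 j z (ibr (q z) u) := by
  intro z u
  have key := hL3 z (q z * ibr (q z) u) (fr (q z) u)
  rw [ibr_mul (hq z), fr_mul (hq z), zero_add,
    show q z * (ibr (q z) u : ℝ) + fr (q z) u = u from by unfold fr; ring,
    L4 (q := q) (b1 := b1) (j := j) hq z _ (fr_nonneg (hq z) u) (fr_lt (hq z) u)] at key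
  unfold hF
  rw [key]; ring

lemma L6 (hq : ∀ z, 0 < q z)
    (hL3 : ∀ (z : Z) (s t : ℝ),
      gF q b1 j z (s + t) = b1 z ^ ibr (q z) s * gF q b1 j z (fr (q z) s + t) +
        Real.exp (-(κ * t)) * gF q b1 j z s) :
    ∀ (z : Z) (n m : ℤ),
      hF q b1 j z (n + m) = b1 z ^ n * hF q b1 j z m +
        Real.exp (-(κ * (q z * (m : ℝ)))) * hF q b1 j z n := by
  intro z n m
  have key := hL3 z (q z * n) (q z * m)
  rw [ibr_mul (hq z), fr_mul (hq z), zero_add,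
    show q z * (n : ℝ) + q z * (m : ℝ) = q z * (((n + m : ℤ)) : ℝ) from by push_cast; ring] at key
  unfold hF
  exact key

lemma keyT (hq : ∀ z, 0 < q z) (hb1_val : ∀ z, b1 z = 1 ∨ b1 z = -1)
    (hL5 : ∀ (z : Z) (u : ℝ),
      gF q b1 j z u = Real.exp (-(κ * fr (q z) u)) * hF q b1 j z (ibr (q z) u))
    (hL6 : ∀ (z : Z) (n m : ℤ),
      hF q b1 j z (n + m) = b1 z ^ n * hF q b1 j z m +
        Real.exp (-(κ * (q z * (m : ℝ)))) * hF q b1 j z n) :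
    ∀ (z : Z) (u : ℝ),
      b (z, 0) * gF q b1 j z u =
        muF q κ b1 b j z * (b1 z ^ ibr (q z) u * Real.exp (-(κ * fr (q z) u)) -
          Real.exp (-(κ * u))) + j1F q κ b1 b j z * (ibr (q z) u : ℝ) := by
  intro z u
  have hEu : Real.exp (-(κ * u)) =
      Real.exp (-(κ * fr (q z) u)) * Real.exp (-(κ * (q z * (ibr (q z) u : ℝ)))) := by
    rw [← Real.exp_add]
    congr 1
    unfold fr
    ring
  have hsym : hF q b1 j z (ibr (q z) u) * (Real.exp (-(κ * (q z * ((1:ℤ) : ℝ)))) - b1 z ^ (1:ℤ))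
      = hF q b1 j z 1 * (Real.exp (-(κ * (q z * (ibr (q z) u : ℝ)))) - b1 z ^ ibr (q z) u) := by
    have A := hL6 z (ibr (q z) u) 1
    have B := hL6 z 1 (ibr (q z) u)
    rw [add_comm] at B
    linear_combination B - A
  rw [hL5 z u, hEu]
  by_cases hA : b1 z = 1 ∧ κ = 0
  · obtain ⟨h1, h0⟩ := hA
    subst h0
    have hadd : ∀ n m : ℤ, hF q b1 j z (n + m) = hF q b1 j z n + hF q b1 j z m := by
      intro a c
      have := hL6 z a c
      simp only [h1, one_zpow, zero_mul, neg_zero, Real.exp_zero, one_mul] at this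
      linarith
    simp only [muF, j1F, h1, true_and, if_true]
    simp only [zero_mul, neg_zero, Real.exp_zero, one_mul, h1, one_zpow]
    rw [int_linear (hF q b1 j z) hadd (ibr (q z) u)]
    ring
  · have hD : Real.exp (-(κ * q z)) - b1 z ≠ 0 := by
      rcases hb1_val z with h | h
      · rw [h]
        intro hc
        apply hA
        refine ⟨h, ?_⟩
        have he : Real.exp (-(κ * q z)) = 1 := by linarith
        rw [Real.exp_eq_one_iff, neg_eq_zero, mul_eq_zero] at he
        rcases he with h' | h'
        · exact h'
        · exact absurd h' (hq z).ne'
      · rw [h]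
        intro hc
        nlinarith [Real.exp_pos (-(κ * q z))]
    rw [show Real.exp (-(κ * (q z * ((1:ℤ) : ℝ)))) = Real.exp (-(κ * q z)) from by norm_num,
      zpow_one] at hsym
    simp only [muF, j1F, if_neg hA]
    field_simp
    linear_combination (norm := ring_nf) (b (z, 0) * Real.exp (-(κ * fr (q z) u))) * hsym

theorem stmt18' (hq : ∀ z, 0 < q z)
    (hb1_val : ∀ z, b1 z = 1 ∨ b1 z = -1)
    (hb_val : ∀ p : Z × ℝ, b p = 1 ∨ b p = -1)
    (hj : ∀ c1 c2 : ℝ, 0 < c1 → 0 < c2 → ∀ (z : Z) (v : ℝ), 0 ≤ v → v < q z →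
      j (c1 * c2) (z, v) = c2 ^ (-κ) * j c1 (z, v) +
        (b1 z ^ ibr (q z) (v + Real.log c1) *
            (b (z, fr (q z) (v + Real.log c1)) / b (z, v))) *
          j c2 (z, fr (q z) (v + Real.log c1))) :
    ∀ c : ℝ, 0 < c → ∀ (z : Z) (v : ℝ), 0 ≤ v → v < q z →
        j c (z, v) =
          (b1 z ^ ibr (q z) (v + Real.log c) *
              (b (z, fr (q z) (v + Real.log c)) / b (z, v))) *
            j0F q κ b1 b j (z, fr (q z) (v + Real.log c)) -
          c ^ (-κ) * j0F q κ b1 b j (z, v) +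
          (j1F q κ b1 b j z / b (z, v)) * (ibr (q z) (v + Real.log c) : ℝ) *
            (if b1 z = 1 then (1 : ℝ) else 0) * (if κ = 0 then (1 : ℝ) else 0) := by
  have hdiv : ∀ (x : ℝ) (p : Z × ℝ), x / b p = x * b p := by
    intro x p; rcases hb_val p with h | h <;> rw [h] <;> ring
  have hL2' := L2 hq hb_val hj
  have hL3' := L3 hq hb1_val hL2'
  have hL5' := L5 hq hL3'
  have hL6' := L6 hq hL3'
  intro c hc z v hv0 hv1
  obtain ⟨t, rfl⟩ : ∃ t, c = Real.exp t := ⟨Real.log c, (Real.exp_log hc).symm⟩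
  rw [Real.log_exp, exp_rpow']
  have hsqv : b (z, v) * b (z, v) = 1 := by
    rcases hb_val (z, v) with h | h <;> rw [h] <;> norm_num
  have hsqw : b (z, fr (q z) (v + t)) * b (z, fr (q z) (v + t)) = 1 := by
    rcases hb_val (z, fr (q z) (v + t)) with h | h <;> rw [h] <;> norm_num
  have hJ := L1 hq hb_val hj z v hv0 hv1 t
  simp only [phiF] at hJ
  have hJ' : j (Real.exp t) (z, v) = b (z, v) * (b (z, 0) *
      (j (Real.exp (v + t)) (z, 0) - Real.exp (-(κ * t)) * j (Real.exp v) (z, 0))) := by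
    linear_combination b (z, v) * hJ - j (Real.exp t) (z, v) * hsqv
  have key := keyT (b := b) hq hb1_val hL5' hL6' z (v + t)
  simp only [gF, phiF] at key
  have hee : Real.exp (-(κ * t)) * Real.exp (-(κ * v)) = Real.exp (-(κ * (v + t))) := by
    rw [← Real.exp_add]; congr 1; ring
  have hI : j1F q κ b1 b j z *
      ((if b1 z = 1 then (1 : ℝ) else 0) * (if κ = 0 then (1 : ℝ) else 0)) =
      j1F q κ b1 b j z := by
    by_cases h1 : b1 z = 1 <;> by_cases h2 : κ = 0 <;> simp [j1F, h1, h2]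
  simp only [j0F, phiF]
  simp only [hdiv]
  linear_combination hJ' + b (z, v) * key + b (z, v) * muF q κ b1 b j z * hee -
    b (z, v) * (ibr (q z) (v + t) : ℝ) * hI -
    (b1 z ^ ibr (q z) (v + t) * b (z, v) *
      (b (z, 0) * j (Real.exp (fr (q z) (v + t))) (z, 0) +
        muF q κ b1 b j z * Real.exp (-(κ * fr (q z) (v + t))))) * hsqw

end Main

/-- every 2-semi-additive functional with exponent `κ = H − 1/α` for the
cyclic flow `ψ_c(z,v) = (z, {v + ln c}_{q(z)})` and the cocycle
`b_c(z,v) = b₁(z)^{[v + ln c]_{q(z)}} b(ψ_c(z,v))/b(z,v)` is of the form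
`j_c(z,v) = b_c(z,v) j(ψ_c(z,v)) − c^{-κ} j(z,v)
  + (j₁(z)/b(z,v)) [v + ln c]_{q(z)} 𝟙{b₁(z)=1} 𝟙{κ=0}`. -/
theorem stmt18 {Z : Type*} (q : Z → ℝ) (hq : ∀ z, 0 < q z) (κ : ℝ)
    (b1 : Z → ℝ) (hb1_val : ∀ z, b1 z = 1 ∨ b1 z = -1)
    (b : Z × ℝ → ℝ) (hb_val : ∀ p : Z × ℝ, b p = 1 ∨ b p = -1)
    (j : ℝ → Z × ℝ → ℝ)
    (hj : ∀ c1 c2 : ℝ, 0 < c1 → 0 < c2 → ∀ (z : Z) (v : ℝ), 0 ≤ v → v < q z →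
      j (c1 * c2) (z, v) = c2 ^ (-κ) * j c1 (z, v) +
        (b1 z ^ ibr (q z) (v + Real.log c1) *
            (b (z, fr (q z) (v + Real.log c1)) / b (z, v))) *
          j c2 (z, fr (q z) (v + Real.log c1))) :
    ∃ (j1 : Z → ℝ) (j0 : Z × ℝ → ℝ),
      ∀ c : ℝ, 0 < c → ∀ (z : Z) (v : ℝ), 0 ≤ v → v < q z →
        j c (z, v) =
          (b1 z ^ ibr (q z) (v + Real.log c) *
              (b (z, fr (q z) (v + Real.log c)) / b (z, v))) *
            j0 (z, fr (q z) (v + Real.log c)) -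
          c ^ (-κ) * j0 (z, v) +
          (j1 z / b (z, v)) * (ibr (q z) (v + Real.log c) : ℝ) *
            (if b1 z = 1 then (1 : ℝ) else 0) * (if κ = 0 then (1 : ℝ) else 0) := by
  exact ⟨j1F q κ b1 b j, j0F q κ b1 b j, stmt18' hq hb1_val hb_val hj⟩
end
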